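/- arXiv:1708.07017 — 3 statements merged into one kernel-verified Lean document; each statement's English description precedes it below -/
import Mathlib

section
/- Let θ₁ ∈ (−π, π), let g : ℝ → ℝ be continuous and 2π-periodic, and let a, b satisfy −π ≤ a < θ₁ < b ≤ π. Then ∫_{a}^{b} g(θ)·u_δ(ρ, θ, θ₁) dθ tends to g(θ₁) as ρ → 1⁻, where u_δ(ρ, θ, θ₁) = 1/(2π) − (1/π)·ρ(ρ − cos(θ − θ₁)) / ((ρ² + 1) − 2ρ cos(θ − θ₁)). -/
/-! The kernel `u_δ(ρ, θ, θ₁)` equals `P_ρ(θ - θ₁)`, where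
`P_ρ(θ) = (1 - ρ²) / (2π (1 - 2ρ cos θ + ρ²))` is the Poisson kernel of the unit disc divided by
`2π`. It is nonnegative, has integral `1` over a period (the Poisson formula for the constant
function `1`), and is bounded by a multiple of `1 - ρ²` away from `2πℤ`, so it tends to `0`
uniformly there as `ρ → 1⁻`. Since `[a - θ₁, b - θ₁] ⊆ (-2π, 2π)` contains no other point of
`2πℤ` than `0`, the peak-function theorem applies. -/

open Real Filter MeasureTheory Set Topology

noncomputable def circlePoissonKernel (ρ θ : ℝ) : ℝ :=
  (1 - ρ ^ 2) / (2 * π * (1 - 2 * ρ * cos θ + ρ ^ 2))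

lemma eventually_abs_lt_one_nhdsLT_one : ∀ᶠ ρ : ℝ in 𝓝[<] 1, |ρ| < 1 := by
  filter_upwards [Ioo_mem_nhdsLT (show (-1 : ℝ) < 1 by norm_num)] with ρ hρ using abs_lt.2 hρ

lemma cos_lt_one_of_ne_zero {θ : ℝ} (h₀ : θ ≠ 0) (h₁ : -(2 * π) < θ) (h₂ : θ < 2 * π) :
    cos θ < 1 :=
  (cos_le_one θ).lt_of_ne fun h ↦ h₀ ((cos_eq_one_iff_of_lt_of_lt h₁ h₂).1 h)

section

variable {ρ : ℝ}

lemma one_sub_two_mul_mul_cos_add_sq_pos (hρ : |ρ| < 1) (θ : ℝ) :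
    0 < 1 - 2 * ρ * cos θ + ρ ^ 2 := by
  have hcos : ρ * cos θ ≤ |ρ| :=
    calc ρ * cos θ ≤ |ρ| * |cos θ| := (le_abs_self _).trans (abs_mul _ _).le
      _ ≤ |ρ| := mul_le_of_le_one_right (abs_nonneg ρ) (abs_cos_le_one θ)
  nlinarith [sq_abs ρ]

lemma circlePoissonKernel_nonneg (hρ : |ρ| < 1) (θ : ℝ) : 0 ≤ circlePoissonKernel ρ θ := by
  have hD := one_sub_two_mul_mul_cos_add_sq_pos hρ θ
  have hρ2 := (sq_lt_one_iff_abs_lt_one ρ).2 hρ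
  unfold circlePoissonKernel
  exact div_nonneg (by linarith) (by positivity)

lemma continuous_circlePoissonKernel (hρ : |ρ| < 1) : Continuous (circlePoissonKernel ρ) :=
  continuous_const.div (by fun_prop) fun θ ↦
    (mul_pos two_pi_pos (one_sub_two_mul_mul_cos_add_sq_pos hρ θ)).ne'

lemma circlePoissonKernel_eq_one_div_two_pi_sub (hρ : |ρ| < 1) (θ : ℝ) :
    circlePoissonKernel ρ θ = 1 / (2 * π) - (1 / π) * (ρ * (ρ - cos θ)) /
      ((ρ ^ 2 + 1) - 2 * ρ * cos θ) := by
  rw [circlePoissonKernel, show (ρ ^ 2 + 1) - 2 * ρ * cos θ = 1 - 2 * ρ * cos θ + ρ ^ 2 by ring]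
  have hD := (one_sub_two_mul_mul_cos_add_sq_pos hρ θ).ne'
  generalize hD' : 1 - 2 * ρ * cos θ + ρ ^ 2 = D at hD ⊢
  have := pi_ne_zero
  field_simp
  linear_combination hD'

lemma circlePoissonKernel_le {δ θ : ℝ} (hρ₀ : 0 < ρ) (hρ₁ : ρ < 1) (hδ : 0 < δ)
    (hθ : δ ≤ 1 - cos θ) : circlePoissonKernel ρ θ ≤ (1 - ρ ^ 2) / (4 * π * ρ * δ) := by
  -- the denominator is `(1 - ρ)² + 2ρ(1 - cos θ)`
  have hden : 2 * ρ * δ ≤ 1 - 2 * ρ * cos θ + ρ ^ 2 := by nlinarith [sq_nonneg (1 - ρ)]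
  rw [show 4 * π * ρ * δ = 2 * π * (2 * ρ * δ) by ring, circlePoissonKernel]
  gcongr
  nlinarith

lemma poissonKernel_circleMap (ρ θ : ℝ) :
    poissonKernel 0 ρ (circleMap 0 1 θ) = 2 * π * circlePoissonKernel ρ θ := by
  have hnorm : ‖circleMap 0 1 θ - ρ‖ ^ 2 = 1 - 2 * ρ * cos θ + ρ ^ 2 := by
    rw [Complex.sq_norm, Complex.normSq_apply]
    simp only [circleMap, Complex.sub_re, Complex.sub_im, zero_add, Complex.ofReal_one, one_mul,
      Complex.exp_ofReal_mul_I_re, Complex.exp_ofReal_mul_I_im, Complex.ofReal_re,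
      Complex.ofReal_im]
    nlinarith [sin_sq_add_cos_sq θ]
  rw [poissonKernel_def, circleMap_sub_center, norm_circleMap_zero, sub_zero, hnorm,
    Complex.norm_real, Real.norm_eq_abs, sq_abs, sq_abs, one_pow, circlePoissonKernel]
  field_simp

lemma integral_circlePoissonKernel_zero_two_pi (hρ : |ρ| < 1) :
    ∫ θ in 0..2 * π, circlePoissonKernel ρ θ = 1 := by
  have h := (diffContOnCl_const (c := (1 : ℂ))).circleAverage_poissonKernel_smul
    (c := 0) (R := 1) (w := ρ) (by simpa using hρ)
  have h2π : (2 * π)⁻¹ * (2 * π) = 1 := by field_simp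
  simp only [Real.circleAverage_def] at h
  exact_mod_cast (by
    simpa [poissonKernel_circleMap, ← mul_assoc, h2π, intervalIntegral.integral_ofReal] using h)

lemma integral_circlePoissonKernel (hρ : |ρ| < 1) :
    ∫ θ in -π..π, circlePoissonKernel ρ θ = 1 := by
  have hper : Function.Periodic (circlePoissonKernel ρ) (2 * π) := fun θ ↦ by
    simp only [circlePoissonKernel, cos_add_two_pi]
  have h := hper.intervalIntegral_add_eq (-π) 0
  rw [show -π + 2 * π = π by ring, zero_add] at h
  rw [h, integral_circlePoissonKernel_zero_two_pi hρ]

lemma tendstoUniformlyOn_circlePoissonKernel {s : Set ℝ} (hs : IsCompact s)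
    (hcos : ∀ θ ∈ s, cos θ < 1) :
    TendstoUniformlyOn circlePoissonKernel 0 (𝓝[<] 1) s := by
  obtain ⟨δ, hδ, hδs⟩ := hs.exists_forall_le' (continuous_const.sub continuous_cos).continuousOn
    fun θ hθ ↦ sub_pos.2 (hcos θ hθ)
  have hbound : Tendsto (fun ρ : ℝ ↦ (1 - ρ ^ 2) / (4 * π * ρ * δ)) (𝓝[<] 1) (𝓝 0) := by
    have h : ContinuousAt (fun ρ : ℝ ↦ (1 - ρ ^ 2) / (4 * π * ρ * δ)) 1 := by
      fun_prop (disch := positivity)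
    simpa using h.tendsto.mono_left nhdsWithin_le_nhds
  rw [Metric.tendstoUniformlyOn_iff]
  intro ε hε
  filter_upwards [Ioo_mem_nhdsLT one_pos, hbound.eventually (gt_mem_nhds hε)] with ρ hρ hρε θ hθ
  have hρ' : |ρ| < 1 := abs_lt.2 ⟨by linarith [hρ.1], hρ.2⟩
  rw [Pi.zero_apply, dist_zero_left, Real.norm_eq_abs,
    abs_of_nonneg (circlePoissonKernel_nonneg hρ' θ)]
  exact (circlePoissonKernel_le hρ.1 hρ.2 hδ (hδs θ hθ)).trans_lt hρε

lemma tendsto_intervalIntegral_circlePoissonKernel_zero {c d : ℝ}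
    (hcos : ∀ θ ∈ uIcc c d, cos θ < 1) :
    Tendsto (fun ρ ↦ ∫ θ in c..d, circlePoissonKernel ρ θ) (𝓝[<] 1) (𝓝 0) := by
  have hcont : ∀ᶠ ρ in 𝓝[<] 1, ContinuousOn (circlePoissonKernel ρ) (uIcc c d) := by
    filter_upwards [eventually_abs_lt_one_nhdsLT_one] with ρ hρ
      using (continuous_circlePoissonKernel hρ).continuousOn
  simpa using (tendstoUniformlyOn_circlePoissonKernel isCompact_uIcc hcos)
    |>.tendsto_intervalIntegral_of_continuousOn hcont

/-- Only `[-π, π]` carries mass in the limit: the rest of `[c, d]` stays away from `2πℤ`. -/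
lemma tendsto_intervalIntegral_circlePoissonKernel_one {c d : ℝ} (hc : -(2 * π) < c)
    (hc₀ : c < 0) (hd₀ : 0 < d) (hd : d < 2 * π) :
    Tendsto (fun ρ ↦ ∫ θ in c..d, circlePoissonKernel ρ θ) (𝓝[<] 1) (𝓝 1) := by
  have hleft := tendsto_intervalIntegral_circlePoissonKernel_zero (c := c) (d := -π) fun θ hθ ↦
    cos_lt_one_of_ne_zero (hθ.2.trans_lt (max_lt hc₀ (by linarith [pi_pos]))).ne
      ((lt_min hc (by linarith [pi_pos])).trans_le hθ.1)
      (hθ.2.trans_lt (max_lt (by linarith) (by linarith [pi_pos])))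
  have hright := tendsto_intervalIntegral_circlePoissonKernel_zero (c := π) (d := d) fun θ hθ ↦
    cos_lt_one_of_ne_zero ((lt_min pi_pos hd₀).trans_le hθ.1).ne'
      ((lt_min (by linarith [pi_pos]) (by linarith)).trans_le hθ.1)
      (hθ.2.trans_lt (max_lt (by linarith [pi_pos]) hd))
  have hsum : Tendsto (fun ρ ↦ (∫ θ in c..-π, circlePoissonKernel ρ θ) + 1 +
      ∫ θ in π..d, circlePoissonKernel ρ θ) (𝓝[<] 1) (𝓝 1) := by
    simpa using (hleft.add (tendsto_const_nhds (x := (1 : ℝ)))).add hright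
  refine hsum.congr' ?_
  filter_upwards [eventually_abs_lt_one_nhdsLT_one] with ρ hρ
  have hint : ∀ u v, IntervalIntegrable (circlePoissonKernel ρ) volume u v :=
    fun u v ↦ (continuous_circlePoissonKernel hρ).intervalIntegrable u v
  rw [← integral_circlePoissonKernel hρ,
    intervalIntegral.integral_add_adjacent_intervals (hint _ _) (hint _ _),
    intervalIntegral.integral_add_adjacent_intervals (hint _ _) (hint _ _)]

theorem tendsto_intervalIntegral_circlePoissonKernel_mul {g : ℝ → ℝ} {c d : ℝ}
    (hc : -(2 * π) < c) (hc₀ : c < 0) (hd₀ : 0 < d) (hd : d < 2 * π)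
    (hg : ContinuousOn g (Icc c d)) :
    Tendsto (fun ρ ↦ ∫ θ in c..d, circlePoissonKernel ρ θ * g θ) (𝓝[<] 1) (𝓝 (g 0)) := by
  have hcd : c ≤ d := (hc₀.trans hd₀).le
  have hpeak := tendsto_setIntegral_peak_smul_of_integrableOn_of_tendsto (μ := volume)
    (l := 𝓝[<] 1) (φ := circlePoissonKernel) measurableSet_Icc measurableSet_Icc subset_rfl
    self_mem_nhdsWithin measure_Icc_lt_top.ne ?nonneg ?unif ?mass ?meas hg.integrableOn_Icc
    (hg 0 ⟨hc₀.le, hd₀.le⟩)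
  · simpa only [smul_eq_mul, integral_Icc_eq_integral_Ioc, ← intervalIntegral.integral_of_le hcd]
      using hpeak
  case nonneg =>
    filter_upwards [eventually_abs_lt_one_nhdsLT_one] with ρ hρ
      using fun θ _ ↦ circlePoissonKernel_nonneg hρ θ
  case unif =>
    intro u hu h0u
    refine tendstoUniformlyOn_circlePoissonKernel (isCompact_Icc.diff hu) ?_
    rintro θ ⟨⟨hcθ, hθd⟩, hθu⟩
    exact cos_lt_one_of_ne_zero (by rintro rfl; exact hθu h0u) (by linarith) (by linarith)
  case mass =>
    simpa only [integral_Icc_eq_integral_Ioc, ← intervalIntegral.integral_of_le hcd]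
      using tendsto_intervalIntegral_circlePoissonKernel_one hc hc₀ hd₀ hd
  case meas =>
    filter_upwards [eventually_abs_lt_one_nhdsLT_one] with ρ hρ
      using (continuous_circlePoissonKernel hρ).aestronglyMeasurable

end

theorem stmt_7_general (θ₁ : ℝ)
    (g : ℝ → ℝ) (hg : Continuous g)
    (a b : ℝ) (ha : -Real.pi ≤ a) (hab : a < θ₁) (hb : θ₁ < b) (hbπ : b ≤ Real.pi) :
    Filter.Tendsto (fun ρ : ℝ =>
        ∫ θ in a..b,
          g θ *
            (1 / (2 * Real.pi) -
              (1 / Real.pi) * (ρ * (ρ - Real.cos (θ - θ₁))) /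
                ((ρ ^ 2 + 1) - 2 * ρ * Real.cos (θ - θ₁))))
      (nhdsWithin 1 (Set.Iio 1)) (nhds (g θ₁)) := by
  have hsift := tendsto_intervalIntegral_circlePoissonKernel_mul (c := a - θ₁) (d := b - θ₁)
    (g := fun θ ↦ g (θ + θ₁)) (by linarith) (by linarith) (by linarith) (by linarith)
    (hg.comp (continuous_add_const θ₁)).continuousOn
  rw [zero_add] at hsift
  refine hsift.congr' ?_
  filter_upwards [eventually_abs_lt_one_nhdsLT_one] with ρ hρ
  rw [← intervalIntegral.integral_comp_sub_right (fun θ ↦ circlePoissonKernel ρ θ * g (θ + θ₁))]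
  refine intervalIntegral.integral_congr fun θ _ ↦ ?_
  rw [sub_add_cancel, circlePoissonKernel_eq_one_div_two_pi_sub hρ, mul_comm]

/-- the fundamental (sifting) property of the Dirac delta
"function": for a continuous `2π`-periodic test function `g` and any open
interval `(a, b) ⊆ [−π, π]` containing `θ₁`,
`∫_a^b g(θ)·u_δ(ρ, θ, θ₁) dθ → g(θ₁)` as `ρ → 1⁻`. -/
theorem stmt_7 (θ₁ : ℝ) (hθ₁ : θ₁ ∈ Set.Ioo (-Real.pi) Real.pi)
    (g : ℝ → ℝ) (hg : Continuous g) (hper : Function.Periodic g (2 * Real.pi))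
    (a b : ℝ) (ha : -Real.pi ≤ a) (hab : a < θ₁) (hb : θ₁ < b) (hbπ : b ≤ Real.pi) :
    Filter.Tendsto (fun ρ : ℝ =>
        ∫ θ in a..b,
          g θ *
            (1 / (2 * Real.pi) -
              (1 / Real.pi) * (ρ * (ρ - Real.cos (θ - θ₁))) /
                ((ρ ^ 2 + 1) - 2 * ρ * Real.cos (θ - θ₁))))
      (nhdsWithin 1 (Set.Iio 1)) (nhds (g θ₁)) :=
  stmt_7_general θ₁ g hg a b ha hab hb hbπ
end

section
/- Let θ₁ ∈ ℝ and k a positive integer. As ρ → 1⁻, (1/π)·∫_{−π}^{π} cos(kθ)·u_δ(ρ, θ, θ₁) dθ tends to cos(kθ₁)/π, and (1/π)·∫_{−π}^{π} sin(kθ)·u_δ(ρ, θ, θ₁) dθ tends to sin(kθ₁)/π. -/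
/-!
For `|ρ| < 1` the kernel is the real part of a geometric series in `ρ e^{i(θ - θ₁)}`:
`u_δ(ρ, θ, θ₁) = 1/(2π) + (1/π) ∑_{n ≥ 1} ρⁿ cos (n (θ - θ₁))`.
Integrating termwise against `cos (kθ - α)` (dominated convergence), orthogonality kills every
term except `n = k`, so the integral is exactly `ρᵏ cos (kθ₁ - α)`, which tends to
`cos (kθ₁ - α)` as `ρ → 1`. Cosine and sine are the cases `α = 0` and `α = π / 2`.
-/

open Real Filter Topology MeasureTheory

lemma integral_cos_int_mul_sub {m : ℤ} (hm : m ≠ 0) (γ : ℝ) :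
    ∫ x in (-π)..π, cos (m * x - γ) = 0 := by
  rw [intervalIntegral.integral_comp_mul_sub cos (Int.cast_ne_zero.2 hm), integral_cos, mul_neg]
  simp [sin_sub, sin_int_mul_pi]

lemma integral_cos_mul_cos {m : ℕ} (hm : m ≠ 0) (n : ℕ) (α β : ℝ) :
    ∫ x in (-π)..π, cos (m * x - α) * cos (n * x - β) = if m = n then π * cos (β - α) else 0 := by
  have product_to_sum : ∀ x : ℝ, cos (m * x - α) * cos (n * x - β) =
      (cos (((m - n : ℤ) : ℝ) * x - (α - β)) + cos (((m + n : ℤ) : ℝ) * x - (α + β))) / 2 := by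
    intro x
    rw [show ((m - n : ℤ) : ℝ) * x - (α - β) = (m * x - α) - (n * x - β) by push_cast; ring,
      show ((m + n : ℤ) : ℝ) * x - (α + β) = (m * x - α) + (n * x - β) by push_cast; ring,
      cos_sub (m * x - α), cos_add (m * x - α)]
    ring
  have hcont : ∀ c γ : ℝ, IntervalIntegrable (fun x => cos (c * x - γ)) volume (-π) π :=
    fun c γ => (by fun_prop : Continuous fun x => cos (c * x - γ)).intervalIntegrable _ _
  simp_rw [product_to_sum]
  rw [intervalIntegral.integral_div, intervalIntegral.integral_add (hcont _ _) (hcont _ _),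
    integral_cos_int_mul_sub (m := m + n) (by omega), add_zero]
  split_ifs with hmn
  · subst hmn
    simp only [sub_self, Int.cast_zero, zero_mul, zero_sub, cos_neg,
      intervalIntegral.integral_const, smul_eq_mul]
    rw [← cos_neg (α - β), neg_sub]
    ring
  · rw [integral_cos_int_mul_sub (by omega), zero_div]

lemma sq_add_one_sub_two_mul_mul_cos_pos {ρ : ℝ} (hρ : |ρ| < 1) (φ : ℝ) :
    0 < ρ ^ 2 + 1 - 2 * ρ * cos φ := by
  have : ρ * cos φ ≤ |ρ| := (le_abs_self _).trans <| by
    rw [abs_mul]; exact mul_le_of_le_one_right (abs_nonneg _) (abs_cos_le_one _)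
  nlinarith [sq_abs ρ]

lemma hasSum_pow_succ_mul_cos {ρ : ℝ} (hρ : |ρ| < 1) (φ : ℝ) :
    HasSum (fun n : ℕ => ρ ^ (n + 1) * cos ((n + 1) * φ))
      ((ρ * cos φ - ρ ^ 2) / (ρ ^ 2 + 1 - 2 * ρ * cos φ)) := by
  set w : ℂ := ρ * Complex.exp (φ * Complex.I)
  have hw : ‖w‖ < 1 := by simpa [w, Complex.norm_exp_ofReal_mul_I] using hρ
  have hpow : ∀ n : ℕ, (w ^ n).re = ρ ^ n * cos (n * φ) := fun n => by
    rw [mul_pow, ← Complex.exp_nat_mul, ← Complex.ofReal_pow, Complex.re_ofReal_mul,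
      show (n : ℂ) * (φ * Complex.I) = ((n * φ : ℝ) : ℂ) * Complex.I by push_cast; ring,
      Complex.exp_ofReal_mul_I_re]
  have hgeom : HasSum (fun n : ℕ => w ^ (n + 1)) (w / (1 - w)) := by
    simpa only [pow_succ', div_eq_mul_inv] using (hasSum_geometric_of_norm_lt_one hw).mul_left w
  have hre : w.re = ρ * cos φ := by simpa using hpow 1
  have him : w.im = ρ * sin φ := by
    simp [w, Complex.exp_ofReal_mul_I_im]
  have hnormSq : Complex.normSq (1 - w) = ρ ^ 2 + 1 - 2 * ρ * cos φ := by
    rw [Complex.normSq_apply]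
    simp only [Complex.sub_re, Complex.sub_im, Complex.one_re, Complex.one_im, hre, him]
    linear_combination ρ ^ 2 * sin_sq_add_cos_sq φ
  convert Complex.reCLM.hasSum hgeom using 1
  · ext n
    simp [hpow]
  · rw [Complex.reCLM_apply, Complex.div_re, hnormSq]
    simp only [Complex.sub_re, Complex.sub_im, Complex.one_re, Complex.one_im, hre, him]
    rw [← add_div]
    congr 1
    linear_combination ρ ^ 2 * sin_sq_add_cos_sq φ

/-- The paper's `u_δ(ρ, θ, θ₁) = Re w_δ(ρ e^{iθ}, e^{iθ₁})`. -/
noncomputable def uDelta (ρ θ θ₁ : ℝ) : ℝ :=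
  1 / (2 * π) - (1 / π) * (ρ * (ρ - cos (θ - θ₁))) / ((ρ ^ 2 + 1) - 2 * ρ * cos (θ - θ₁))

lemma hasSum_uDelta {ρ : ℝ} (hρ : |ρ| < 1) (θ θ₁ : ℝ) :
    HasSum (fun n : ℕ => ρ ^ (n + 1) * cos ((n + 1) * (θ - θ₁)) / π)
      (uDelta ρ θ θ₁ - 1 / (2 * π)) := by
  have h := (hasSum_pow_succ_mul_cos hρ (θ - θ₁)).div_const π
  rwa [show uDelta ρ θ θ₁ - 1 / (2 * π) = (ρ * cos (θ - θ₁) - ρ ^ 2) /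
    (ρ ^ 2 + 1 - 2 * ρ * cos (θ - θ₁)) / π by unfold uDelta; ring]

lemma hasSum_integral_mul_uDelta {g : ℝ → ℝ} {a b : ℝ} (hg : IntervalIntegrable g volume a b)
    {ρ : ℝ} (hρ : |ρ| < 1) (θ₁ : ℝ) :
    HasSum (fun n : ℕ => ∫ θ in a..b, g θ * (ρ ^ (n + 1) * cos ((n + 1) * (θ - θ₁)) / π))
      (∫ θ in a..b, g θ * (uDelta ρ θ θ₁ - 1 / (2 * π))) := by
  refine intervalIntegral.hasSum_integral_of_dominated_convergence
    (fun n θ => |ρ| ^ (n + 1) / π * ‖g θ‖) (fun n => ?_) (fun n => ?_) ?_ ?_ ?_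
  · exact hg.def'.aestronglyMeasurable.mul (by fun_prop : Continuous _).aestronglyMeasurable
  · refine ae_of_all _ fun θ _ => ?_
    rw [norm_mul, mul_comm, Real.norm_eq_abs, abs_div, abs_mul, abs_pow, abs_of_pos pi_pos]
    gcongr
    exact mul_le_of_le_one_right (by positivity) (abs_cos_le_one _)
  · have : Summable fun n : ℕ => |ρ| ^ (n + 1) :=
      (summable_geometric_of_lt_one (abs_nonneg ρ) hρ).comp_injective (add_left_injective 1)
    exact ae_of_all _ fun θ _ => (this.div_const π).mul_right _
  · simp_rw [tsum_mul_right]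
    exact hg.norm.const_mul _
  · exact ae_of_all _ fun θ _ => (hasSum_uDelta hρ θ θ₁).mul_left (g θ)

lemma continuous_uDelta {ρ : ℝ} (hρ : |ρ| < 1) (θ₁ : ℝ) : Continuous fun θ => uDelta ρ θ θ₁ :=
  continuous_const.sub <| (by fun_prop : Continuous _).div (by fun_prop) fun θ =>
    (sq_add_one_sub_two_mul_mul_cos_pos hρ (θ - θ₁)).ne'

lemma integral_cos_mul_uDelta {ρ : ℝ} (hρ : |ρ| < 1) (θ₁ α : ℝ) {k : ℕ} (hk : k ≠ 0) :
    ∫ θ in (-π)..π, cos (k * θ - α) * uDelta ρ θ θ₁ = ρ ^ k * cos (k * θ₁ - α) := by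
  have hg : Continuous fun θ => cos (k * θ - α) := by fun_prop
  have hterm (n : ℕ) :
      ∫ θ in (-π)..π, cos (k * θ - α) * (ρ ^ (n + 1) * cos ((n + 1) * (θ - θ₁)) / π)
        = if n = k - 1 then ρ ^ k * cos (k * θ₁ - α) else 0 := by
    have hcongr (θ : ℝ) : cos (k * θ - α) * (ρ ^ (n + 1) * cos ((n + 1) * (θ - θ₁)) / π) =
        ρ ^ (n + 1) / π * (cos (k * θ - α) * cos (((n + 1 : ℕ) : ℝ) * θ - (n + 1) * θ₁)) := by
      rw [mul_sub ((n : ℝ) + 1)]; push_cast; ring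
    rw [intervalIntegral.integral_congr fun θ _ => hcongr θ, intervalIntegral.integral_const_mul,
      integral_cos_mul_cos hk]
    by_cases hn : n = k - 1
    · obtain rfl : k = n + 1 := by omega
      rw [if_pos hn, if_pos rfl]
      push_cast
      field_simp
    · simp [hn, show k ≠ n + 1 by omega]
  have hsum := hasSum_integral_mul_uDelta (hg.intervalIntegrable (-π) π) hρ θ₁
  simp only [hterm] at hsum
  have hmean : ∫ θ in (-π)..π, cos (k * θ - α) = 0 := integral_cos_int_mul_sub (m := k) (by simpa) α
  have hconst : ∫ θ in (-π)..π, cos (k * θ - α) * (uDelta ρ θ θ₁ - 1 / (2 * π)) =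
      ∫ θ in (-π)..π, cos (k * θ - α) * uDelta ρ θ θ₁ := by
    simp only [mul_sub]
    rw [intervalIntegral.integral_sub
      ((hg.fun_mul (continuous_uDelta hρ θ₁)).intervalIntegrable _ _)
      ((hg.fun_mul continuous_const).intervalIntegrable _ _),
      intervalIntegral.integral_mul_const, hmean, zero_mul, sub_zero]
  rw [hconst] at hsum
  exact hsum.unique (hasSum_ite_eq (k - 1) _)

lemma tendsto_integral_cos_mul_uDelta (θ₁ α : ℝ) {k : ℕ} (hk : k ≠ 0) :
    Tendsto (fun ρ => 1 / π * ∫ θ in (-π)..π, cos (k * θ - α) * uDelta ρ θ θ₁) (𝓝[<] 1)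
      (𝓝 (cos (k * θ₁ - α) / π)) := by
  have hlim : Tendsto (fun ρ : ℝ => 1 / π * (ρ ^ k * cos (k * θ₁ - α))) (𝓝[<] 1)
      (𝓝 (cos (k * θ₁ - α) / π)) := by
    refine ((by fun_prop : Continuous _).tendsto' 1 _ ?_).mono_left nhdsWithin_le_nhds
    rw [one_pow, one_mul, one_div_mul_eq_div]
  refine hlim.congr' ?_
  filter_upwards [Ioo_mem_nhdsLT (show (-1 : ℝ) < 1 by norm_num)] with ρ hρ
  rw [integral_cos_mul_uDelta (abs_lt.2 hρ) θ₁ α hk]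

/-- the Fourier coefficients of the Dirac delta "function":
as `ρ → 1⁻`, `(1/π)∫_{−π}^{π} cos(kθ)·u_δ(ρ,θ,θ₁) dθ → cos(kθ₁)/π` and
`(1/π)∫_{−π}^{π} sin(kθ)·u_δ(ρ,θ,θ₁) dθ → sin(kθ₁)/π`. -/
theorem stmt_9 (θ₁ : ℝ) (k : ℕ) (hk : 0 < k) :
    Filter.Tendsto (fun ρ : ℝ =>
        (1 / Real.pi) * ∫ θ in (-Real.pi)..Real.pi,
          Real.cos (k * θ) *
            (1 / (2 * Real.pi) -
              (1 / Real.pi) * (ρ * (ρ - Real.cos (θ - θ₁))) /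
                ((ρ ^ 2 + 1) - 2 * ρ * Real.cos (θ - θ₁))))
      (nhdsWithin 1 (Set.Iio 1)) (nhds (Real.cos (k * θ₁) / Real.pi)) ∧
    Filter.Tendsto (fun ρ : ℝ =>
        (1 / Real.pi) * ∫ θ in (-Real.pi)..Real.pi,
          Real.sin (k * θ) *
            (1 / (2 * Real.pi) -
              (1 / Real.pi) * (ρ * (ρ - Real.cos (θ - θ₁))) /
                ((ρ ^ 2 + 1) - 2 * ρ * Real.cos (θ - θ₁))))
      (nhdsWithin 1 (Set.Iio 1)) (nhds (Real.sin (k * θ₁) / Real.pi)) := by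
  have hcos := tendsto_integral_cos_mul_uDelta θ₁ 0 hk.ne'
  have hsin := tendsto_integral_cos_mul_uDelta θ₁ (π / 2) hk.ne'
  simp only [sub_zero, cos_sub_pi_div_two, uDelta] at hcos hsin
  exact ⟨hcos, hsin⟩
end

section
/- Let n ≥ 0 and N ≥ 1 be integers, let −π ≤ θ₁ < θ₂ < ... < θ_N < π, and let f : ℝ → ℝ be 2π-periodic and n times continuously differentiable on all of ℝ. Suppose that on each open arc between consecutive singular points (that is, on each interval (θ_i, θ_{i+1}) for 1 ≤ i < N, together with the arc from θ_N to θ₁ + 2π) f agrees with a polynomial of degree at most n, and that ∫_{−π}^{π} f(θ) dθ = 0. Then f is identically zero. -/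
open Real

private lemma periodic_iteratedDeriv' {f : ℝ → ℝ} {c : ℝ} (h : Function.Periodic f c) (k : ℕ) :
    Function.Periodic (iteratedDeriv k f) c := by
  intro x
  have hfe : (fun z : ℝ => f (z + c)) = f := funext h
  calc iteratedDeriv k f (x + c) = iteratedDeriv k (fun z => f (z + c)) x := by
        rw [iteratedDeriv_comp_add_const]
    _ = iteratedDeriv k f x := by rw [hfe]

private lemma iteratedDeriv_polyEval (k : ℕ) (p : Polynomial ℝ) :
    iteratedDeriv k (fun y => p.eval y) = fun x => (Polynomial.derivative^[k] p).eval x := by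
  induction k generalizing p with
  | zero => simp [iteratedDeriv_zero]
  | succ k ih =>
    rw [iteratedDeriv_succ', Function.iterate_succ_apply]
    have hd : deriv (fun y => p.eval y) = fun y => (Polynomial.derivative p).eval y :=
      funext fun y => Polynomial.deriv p
    rw [hd, ih]

/-- a `2π`-periodic real function that is `n` times continuously
differentiable on all of `ℝ`, agrees with a polynomial of degree at most `n` on
each of the `N ≥ 1` open arcs between consecutive singular points
`−π ≤ θ₁ < θ₂ < ... < θ_N < π` (the last arc running from `θ_N` to `θ₁ + 2π`),
and has zero average over the circle, is identically zero. -/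
theorem stmt_19 (n N : ℕ) (hN : 0 < N)
    (θs : Fin N → ℝ) (hmono : StrictMono θs)
    (hrange : ∀ i : Fin N, θs i ∈ Set.Ico (-Real.pi) Real.pi)
    (f : ℝ → ℝ) (hper : Function.Periodic f (2 * Real.pi))
    (hf : ContDiff ℝ n f)
    (hpoly : ∀ i : Fin N, ∃ p : Polynomial ℝ, p.natDegree ≤ n ∧
      ∀ x : ℝ, θs i < x →
        x < (if h : (i : ℕ) + 1 < N then θs ⟨(i : ℕ) + 1, h⟩
             else θs ⟨0, hN⟩ + 2 * Real.pi) →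
        f x = p.eval x)
    (hint : ∫ θ in (-Real.pi)..Real.pi, f θ = 0) :
    ∀ x : ℝ, f x = 0 := by
  have hπ := Real.pi_pos
  have h2π : (0:ℝ) < 2 * Real.pi := by positivity
  set i0 : Fin N := ⟨0, hN⟩ with hi0
  set bnd : Fin N → ℝ := fun i =>
    if h : (i : ℕ) + 1 < N then θs ⟨(i : ℕ) + 1, h⟩ else θs i0 + 2 * Real.pi with hbnd
  have hlt : ∀ i, θs i < bnd i := by
    intro i
    rw [hbnd]
    dsimp only
    split_ifs with h
    · exact hmono (by exact Fin.mk_lt_mk.mpr (Nat.lt_succ_self _))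
    · have h1 : θs i < Real.pi := (hrange i).2
      have h2 : -Real.pi ≤ θs i0 := (hrange i0).1
      linarith
  set g : ℝ → ℝ := iteratedDeriv n f with hgdef
  have hgc : Continuous g := hf.continuous_iteratedDeriv n (by exact_mod_cast le_rfl)
  have hgper : Function.Periodic g (2 * Real.pi) := periodic_iteratedDeriv' hper n
  -- g is constant on each closed arc
  have hconst : ∀ i, ∀ y ∈ Set.Icc (θs i) (bnd i), g y = g (θs i) := by
    intro i
    obtain ⟨p, hdeg, heq⟩ := hpoly i
    set c : ℝ := (Polynomial.derivative^[n] p).coeff 0 with hc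
    have hCp : Polynomial.derivative^[n] p = Polynomial.C c :=
      Polynomial.eq_C_of_natDegree_le_zero
        (le_trans (Polynomial.natDegree_iterate_derivative p n) (by omega))
    have hIoo : Set.EqOn g (fun _ => c) (Set.Ioo (θs i) (bnd i)) := by
      intro x hx
      have hev : f =ᶠ[nhds x] fun y => p.eval y := by
        filter_upwards [isOpen_Ioo.mem_nhds hx] with y hy
        exact heq y hy.1 hy.2
      have h1 : g x = iteratedDeriv n (fun y => p.eval y) x :=
        Filter.EventuallyEq.iteratedDeriv_eq n hev
      rw [h1, iteratedDeriv_polyEval, hCp]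
      simp
    have hIcc : Set.EqOn g (fun _ => c) (Set.Icc (θs i) (bnd i)) := by
      have := hIoo.closure hgc continuous_const
      rwa [closure_Ioo (hlt i).ne] at this
    intro y hy
    rw [hIcc hy, hIcc (Set.left_mem_Icc.mpr (hlt i).le)]
  -- g takes the same value at all singular points
  have hchain : ∀ k (hk : k < N), g (θs ⟨k, hk⟩) = g (θs i0) := by
    intro k
    induction k with
    | zero => intro hk; rfl
    | succ k ih =>
      intro hk
      have hk' : k < N := Nat.lt_of_succ_lt hk
      have hmem : θs ⟨k + 1, hk⟩ ∈ Set.Icc (θs ⟨k, hk'⟩) (bnd ⟨k, hk'⟩) := by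
        constructor
        · exact (hmono (Fin.mk_lt_mk.mpr (Nat.lt_succ_self _))).le
        · rw [hbnd]
          dsimp only
          rw [dif_pos hk]
      rw [hconst _ _ hmem, ih hk']
  -- g is constant on the fundamental interval
  have hIco : ∀ y ∈ Set.Ico (θs i0) (θs i0 + 2 * Real.pi), g y = g (θs i0) := by
    intro y hy
    classical
    set S : Finset (Fin N) := Finset.univ.filter (fun i => θs i ≤ y) with hS
    have hne : S.Nonempty := ⟨i0, by simp [hS, hy.1]⟩
    set i : Fin N := S.max' hne with hi
    have hiS : i ∈ S := S.max'_mem hne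
    have hile : θs i ≤ y := by simpa [hS] using hiS
    have hyb : y ≤ bnd i := by
      rw [hbnd]
      dsimp only
      split_ifs with h
      · by_contra hcon
        push_neg at hcon
        have : (⟨(i:ℕ)+1, h⟩ : Fin N) ∈ S := by simp [hS, hcon.le]
        have := S.le_max' _ this
        rw [← hi] at this
        exact absurd this (by simp [Fin.lt_iff_val_lt_val, Fin.le_iff_val_le_val])
      · exact hy.2.le
    rw [hconst i y ⟨hile, hyb⟩, hchain i.val i.isLt]
  -- g is constant everywhere
  have hgall : ∀ x, g x = g (θs i0) := by
    intro x
    have hy := toIcoMod_mem_Ico h2π (θs i0) x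
    have hxy : g (toIcoMod h2π (θs i0) x) = g x := by
      rw [toIcoMod]
      exact hgper.sub_zsmul_eq _
    rw [← hxy]
    exact hIco _ hy
  -- downward induction
  have key : ∀ m, m ≤ n → ∃ c, ∀ x, iteratedDeriv (n - m) f x = c := by
    intro m
    induction m with
    | zero => intro _; exact ⟨g (θs i0), by simpa using hgall⟩
    | succ m ih =>
      intro hm
      obtain ⟨c, hc⟩ := ih (Nat.le_of_succ_le hm)
      set k := n - (m + 1) with hkd
      have hk : n - m = k + 1 := by omega
      have hdiff : Differentiable ℝ (iteratedDeriv k f) :=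
        hf.differentiable_iteratedDeriv k (by exact_mod_cast (by omega : k < n))
      have hderiv : ∀ x, deriv (iteratedDeriv k f) x = c := by
        intro x
        have := hc x
        rwa [hk, iteratedDeriv_succ] at this
      have hperk : Function.Periodic (iteratedDeriv k f) (2 * Real.pi) :=
        periodic_iteratedDeriv' hper k
      have hφ : ∀ x y : ℝ,
          iteratedDeriv k f x - c * x = iteratedDeriv k f y - c * y := by
        apply is_const_of_deriv_eq_zero
        · exact hdiff.sub ((differentiable_id).const_mul c)
        · intro x
          have hd : HasDerivAt (fun x => iteratedDeriv k f x - c * x) (c - c * 1) x :=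
            ((hderiv x ▸ (hdiff x).hasDerivAt) : HasDerivAt _ c x).sub
              ((hasDerivAt_id x).const_mul c)
          simpa using hd.deriv
      have hc0 : c = 0 := by
        have h1 := hφ (0 + 2 * Real.pi) 0
        rw [hperk 0] at h1
        have : c * (2 * Real.pi) = 0 := by linarith [h1]
        rcases mul_eq_zero.mp this with h | h
        · exact h
        · exact absurd h (by positivity)
      refine ⟨iteratedDeriv k f 0, fun x => ?_⟩
      have := is_const_of_deriv_eq_zero hdiff (fun x => by rw [hderiv x, hc0]) x 0
      rw [← hkd] at *
      exact this
  obtain ⟨c, hc⟩ := key n le_rfl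
  have hfc : ∀ x, f x = c := by
    intro x
    have := hc x
    rwa [Nat.sub_self, iteratedDeriv_zero] at this
  have hintc : ∫ θ in (-Real.pi)..Real.pi, f θ = c * (2 * Real.pi) := by
    rw [intervalIntegral.integral_congr (fun x _ => hfc x)]
    simp [smul_eq_mul]
    ring
  rw [hintc] at hint
  have hc0 : c = 0 := by
    rcases mul_eq_zero.mp hint with h | h
    · exact h
    · exact absurd h (by positivity)
  intro x
  rw [hfc x, hc0]
end
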